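/- In the symmetric case α=β, the virtual action of the two-point blow-up of ℂP₂ computed from the pentagon satisfies 𝒜(α) = (9 + 96α + 396α² + 840α³ + 954α⁴ + 528α⁵ + 96α⁶)/(1 + 12α + 54α² + 120α³ + 138α⁴ + 72α⁵ + 12α⁶). -/

import Mathlib

open MeasureTheory

/-- The lattice length of the segment from `v` to `w`: the value `|u|` where
`w - v = u • (p, q)` for a primitive (coprime) integer vector `(p, q)`. -/
noncomputable def latticeLength (v w : ℝ × ℝ) : ℝ :=
  sInf {r : ℝ | ∃ (u : ℝ) (p q : ℤ), IsCoprime p q ∧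
    w - v = u • ((p : ℝ), (q : ℝ)) ∧ r = |u|}

/-- Integral of `f` over the segment from `v` to `w` with respect to the lattice
length measure dλ (equal to `latticeLength v w` times normalized length measure). -/
noncomputable def edgeInt (v w : ℝ × ℝ) (f : ℝ × ℝ → ℝ) : ℝ :=
  latticeLength v w * ∫ t in (0:ℝ)..(1:ℝ), f (v + t • (w - v))

/-- The pentagon with vertices (1,0), (α+1,0), (α+1,β+1), (0,β+1), (0,1). -/
noncomputable def pent (α β : ℝ) : Set (ℝ × ℝ) :=
  convexHull ℝ ({(1, 0), (α + 1, 0), (α + 1, β + 1), (0, β + 1), (0, 1)} : Set (ℝ × ℝ))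

noncomputable def pentArea (α β : ℝ) : ℝ := (volume (pent α β)).toReal

noncomputable def pentPerim (α β : ℝ) : ℝ :=
  latticeLength (1, 0) (α + 1, 0) + latticeLength (α + 1, 0) (α + 1, β + 1) +
    latticeLength (α + 1, β + 1) (0, β + 1) + latticeLength (0, β + 1) (0, 1) +
    latticeLength (0, 1) (1, 0)

noncomputable def pentCentroid (α β : ℝ) : ℝ × ℝ :=
  ((∫ p in pent α β, p.1) / pentArea α β, (∫ p in pent α β, p.2) / pentArea α β)

noncomputable def pentBdryInt (α β : ℝ) (f : ℝ × ℝ → ℝ) : ℝ :=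
  edgeInt (1, 0) (α + 1, 0) f + edgeInt (α + 1, 0) (α + 1, β + 1) f +
    edgeInt (α + 1, β + 1) (0, β + 1) f + edgeInt (0, β + 1) (0, 1) f +
    edgeInt (0, 1) (1, 0) f

noncomputable def pentBdryBary (α β : ℝ) : ℝ × ℝ :=
  (pentBdryInt α β (fun p => p.1) / pentPerim α β,
   pentBdryInt α β (fun p => p.2) / pentPerim α β)

/-- The vector 𝔇 joining the interior barycenter to the boundary barycenter. -/
noncomputable def pentD (α β : ℝ) : ℝ × ℝ := pentBdryBary α β - pentCentroid α β

/-- The moment-of-inertia matrix Π of the pentagon about its barycenter. -/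
noncomputable def pentPi (α β : ℝ) : Matrix (Fin 2) (Fin 2) ℝ :=
  !![∫ p in pent α β, (p.1 - (pentCentroid α β).1) * (p.1 - (pentCentroid α β).1),
     ∫ p in pent α β, (p.1 - (pentCentroid α β).1) * (p.2 - (pentCentroid α β).2);
     ∫ p in pent α β, (p.2 - (pentCentroid α β).2) * (p.1 - (pentCentroid α β).1),
     ∫ p in pent α β, (p.2 - (pentCentroid α β).2) * (p.2 - (pentCentroid α β).2)]

/-! For `α, β ≥ 0` the pentagon is the rectangle `[0, α + 1] × [0, β + 1]` with the corner
triangle `x + y < 1` cut off, so by Fubini its area, centroid and second moments are polynomial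
integrals; each edge is a real multiple of a primitive integer vector, which gives its lattice
length. When `α = β` the vector `𝔇` is a multiple of `(1, 1)`, an eigenvector of the symmetric
matrix `Π = !![P, Q; Q, P]` with eigenvalue `P + Q`, so `𝔇 ⬝ Π⁻¹ 𝔇 = |𝔇|² / (P + Q)` and the
formula becomes an identity between rational functions of `α`. -/

open Set Matrix

theorem exists_int_eq_mul_of_smul_eq_smul {c u : ℝ} {p q p' q' : ℤ} (hpq' : IsCoprime p' q')
    (h : c • ((p : ℝ), (q : ℝ)) = u • ((p' : ℝ), (q' : ℝ))) : ∃ k : ℤ, u = c * k := by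
  obtain ⟨m, n, hmn⟩ := hpq'
  have hmn' : (m : ℝ) * p' + n * q' = 1 := by exact_mod_cast hmn
  have h₁ : c * p = u * p' := by simpa using congrArg Prod.fst h
  have h₂ : c * q = u * q' := by simpa using congrArg Prod.snd h
  exact ⟨m * p + n * q, by push_cast; linear_combination (-u) * hmn' - m * h₁ - n * h₂⟩

theorem abs_eq_abs_of_smul_eq_smul {c u : ℝ} {p q p' q' : ℤ} (hpq : IsCoprime p q)
    (hpq' : IsCoprime p' q') (h : c • ((p : ℝ), (q : ℝ)) = u • ((p' : ℝ), (q' : ℝ))) :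
    |c| = |u| := by
  obtain ⟨k, rfl⟩ := exists_int_eq_mul_of_smul_eq_smul hpq' h
  obtain ⟨l, hl⟩ := exists_int_eq_mul_of_smul_eq_smul hpq h.symm
  rcases eq_or_ne c 0 with rfl | hc
  · simp
  have hkl : k * l = 1 := by
    exact_mod_cast mul_left_cancel₀ hc (by linear_combination -hl : c * (k * l : ℝ) = c * 1)
  rcases Int.eq_one_or_neg_one_of_mul_eq_one hkl with rfl | rfl <;> simp

theorem latticeLength_eq_abs {v w : ℝ × ℝ} {p q : ℤ} (hpq : IsCoprime p q) {c : ℝ}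
    (h : w - v = c • ((p : ℝ), (q : ℝ))) : latticeLength v w = |c| := by
  have hset : {r : ℝ | ∃ (u : ℝ) (p' q' : ℤ), IsCoprime p' q' ∧
      w - v = u • ((p' : ℝ), (q' : ℝ)) ∧ r = |u|} = {|c|} := by
    ext r
    constructor
    · rintro ⟨u, p', q', hpq', hu, rfl⟩
      exact (abs_eq_abs_of_smul_eq_smul hpq hpq' (h ▸ hu)).symm
    · rintro rfl
      exact ⟨c, p, q, hpq, h, rfl⟩
  rw [latticeLength, hset, csInf_singleton]

theorem latticeLength_horizontal (x₁ x₂ y : ℝ) : latticeLength (x₁, y) (x₂, y) = |x₂ - x₁| :=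
  latticeLength_eq_abs (p := 1) (q := 0) isCoprime_one_left (by ext <;> simp)

theorem latticeLength_vertical (x y₁ y₂ : ℝ) : latticeLength (x, y₁) (x, y₂) = |y₂ - y₁| :=
  latticeLength_eq_abs (p := 0) (q := 1) isCoprime_one_right (by ext <;> simp)

theorem integral_eq_of_eq_cubic {f : ℝ → ℝ} {c₀ c₁ c₂ c₃ : ℝ}
    (hf : ∀ x, f x = c₀ + c₁ * x + c₂ * x ^ 2 + c₃ * x ^ 3) (l u : ℝ) :
    ∫ x in l..u, f x =
      c₀ * (u - l) + c₁ * (u ^ 2 - l ^ 2) / 2 + c₂ * (u ^ 3 - l ^ 3) / 3 +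
        c₃ * (u ^ 4 - l ^ 4) / 4 := by
  simp (disch := apply Continuous.intervalIntegrable; fun_prop) only [hf,
    intervalIntegral.integral_add, intervalIntegral.integral_const_mul,
    intervalIntegral.integral_const_mul c₁ (fun x => x), integral_pow, integral_id,
    intervalIntegral.integral_const, smul_eq_mul]
  ring

theorem edgeInt_fst (v w : ℝ × ℝ) :
    edgeInt v w (fun p => p.1) = latticeLength v w * ((v.1 + w.1) / 2) := by
  rw [edgeInt, integral_eq_of_eq_cubic (c₀ := v.1) (c₁ := w.1 - v.1) (c₂ := 0) (c₃ := 0)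
    (fun t => by simp only [Prod.fst_add, Prod.smul_fst, Prod.fst_sub, smul_eq_mul]; ring)]
  ring

theorem edgeInt_snd (v w : ℝ × ℝ) :
    edgeInt v w (fun p => p.2) = latticeLength v w * ((v.2 + w.2) / 2) := by
  rw [edgeInt, integral_eq_of_eq_cubic (c₀ := v.2) (c₁ := w.2 - v.2) (c₂ := 0) (c₃ := 0)
    (fun t => by simp only [Prod.snd_add, Prod.smul_snd, Prod.snd_sub, smul_eq_mul]; ring)]
  ring

theorem latticeLength_zero_one_one_zero : latticeLength (0, 1) (1, 0) = 1 :=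
  (latticeLength_eq_abs (p := 1) (q := -1) isCoprime_one_left (c := 1) (by ext <;> simp)).trans
    abs_one

theorem latticeLength_pent_edges {α β : ℝ} (hα : 0 ≤ α) (hβ : 0 ≤ β) :
    latticeLength (1, 0) (α + 1, 0) = α ∧ latticeLength (α + 1, 0) (α + 1, β + 1) = β + 1 ∧
      latticeLength (α + 1, β + 1) (0, β + 1) = α + 1 ∧ latticeLength (0, β + 1) (0, 1) = β ∧
      latticeLength (0, 1) (1, 0) = 1 := by
  refine ⟨?_, ?_, ?_, ?_, latticeLength_zero_one_one_zero⟩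
  · rw [latticeLength_horizontal, add_sub_cancel_right, abs_of_nonneg hα]
  · rw [latticeLength_vertical, sub_zero, abs_of_nonneg (by linarith)]
  · rw [latticeLength_horizontal, zero_sub, abs_neg, abs_of_nonneg (by linarith)]
  · rw [latticeLength_vertical, sub_add_cancel_right, abs_neg, abs_of_nonneg hβ]

theorem pentPerim_eq {α β : ℝ} (hα : 0 ≤ α) (hβ : 0 ≤ β) :
    pentPerim α β = 2 * α + 2 * β + 3 := by
  obtain ⟨h₁, h₂, h₃, h₄, h₅⟩ := latticeLength_pent_edges hα hβ
  rw [pentPerim, h₁, h₂, h₃, h₄, h₅]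
  ring

theorem pentBdryInt_fst {α β : ℝ} (hα : 0 ≤ α) (hβ : 0 ≤ β) :
    pentBdryInt α β (fun p => p.1) = (α + 1) * (α + β + 2) := by
  obtain ⟨h₁, h₂, h₃, h₄, h₅⟩ := latticeLength_pent_edges hα hβ
  rw [pentBdryInt, edgeInt_fst, edgeInt_fst, edgeInt_fst, edgeInt_fst, edgeInt_fst,
    h₁, h₂, h₃, h₄, h₅]
  ring

theorem pentBdryInt_snd {α β : ℝ} (hα : 0 ≤ α) (hβ : 0 ≤ β) :
    pentBdryInt α β (fun p => p.2) = (β + 1) * (α + β + 2) := by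
  obtain ⟨h₁, h₂, h₃, h₄, h₅⟩ := latticeLength_pent_edges hα hβ
  rw [pentBdryInt, edgeInt_snd, edgeInt_snd, edgeInt_snd, edgeInt_snd, edgeInt_snd,
    h₁, h₂, h₃, h₄, h₅]
  ring

theorem Convex.mk_mem_of_mem_Icc {s : Set (ℝ × ℝ)} (hs : Convex ℝ s) {x₁ x₂ x y : ℝ}
    (h₁ : (x₁, y) ∈ s) (h₂ : (x₂, y) ∈ s) (hx : x ∈ Icc x₁ x₂) : (x, y) ∈ s :=
  hs.segment_subset h₁ h₂ <| by
    rw [← Prod.image_mk_segment_left, segment_eq_Icc (hx.1.trans hx.2)]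
    exact mem_image_of_mem _ hx

theorem Convex.mk_mem_of_mem_Icc' {s : Set (ℝ × ℝ)} (hs : Convex ℝ s) {x y₁ y₂ y : ℝ}
    (h₁ : (x, y₁) ∈ s) (h₂ : (x, y₂) ∈ s) (hy : y ∈ Icc y₁ y₂) : (x, y) ∈ s :=
  hs.segment_subset h₁ h₂ <| by
    rw [← Prod.image_mk_segment_right, segment_eq_Icc (hy.1.trans hy.2)]
    exact mem_image_of_mem _ hy

/-- The half-open triangle with vertices `(0, 0)`, `(1, 0)`, `(0, 1)`, written as the region
under a graph so that Fubini applies to it directly. -/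
def cornerTriangle : Set (ℝ × ℝ) := {p | p.1 ∈ Ico 0 1 ∧ p.2 ∈ Ico 0 (1 - p.1)}

theorem measurableSet_cornerTriangle : MeasurableSet cornerTriangle := by
  unfold cornerTriangle
  measurability

theorem cornerTriangle_subset_Icc_prod_Icc {a b : ℝ} (ha : 1 ≤ a) (hb : 1 ≤ b) :
    cornerTriangle ⊆ Icc 0 a ×ˢ Icc 0 b := by
  rintro ⟨x, y⟩ ⟨⟨hx₀, hx₁⟩, hy₀, hy₁⟩
  exact ⟨⟨hx₀, by linarith⟩, hy₀, by dsimp at hy₁; linarith⟩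

theorem Icc_prod_Icc_diff_cornerTriangle (a b : ℝ) :
    Icc 0 a ×ˢ Icc 0 b \ cornerTriangle = Icc 0 a ×ˢ Icc 0 b ∩ {p | 1 ≤ p.1 + p.2} := by
  ext ⟨x, y⟩
  simp only [cornerTriangle, mem_sdiff, mem_inter_iff, mem_prod, mem_Icc, mem_Ico, mem_ofPred_eq]
  constructor
  · rintro ⟨h, hT⟩
    exact ⟨h, by by_contra! hxy; exact hT ⟨⟨h.1.1, by linarith⟩, h.2.1, by linarith⟩⟩
  · rintro ⟨h, hxy⟩
    exact ⟨h, fun hT => by linarith [hT.2.2]⟩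

/-- Each point is reached along a horizontal chord whose right end lies on the edge `x = α + 1`
and whose left end lies on the edge `x + y = 1` or `x = 0`. -/
theorem pent_eq {α β : ℝ} (hα : 0 ≤ α) (hβ : 0 ≤ β) :
    pent α β = Icc 0 (α + 1) ×ˢ Icc 0 (β + 1) \ cornerTriangle := by
  rw [Icc_prod_Icc_diff_cornerTriangle]
  have hconv : Convex ℝ (pent α β) := convex_convexHull ℝ _
  have hv : ∀ v ∈ ({(1, 0), (α + 1, 0), (α + 1, β + 1), (0, β + 1), (0, 1)} : Set (ℝ × ℝ)),
      v ∈ pent α β := fun v hv => subset_convexHull ℝ _ hv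
  apply Subset.antisymm
  · refine convexHull_min ?_ (((convex_Icc _ _).prod (convex_Icc _ _)).inter ?_)
    · simp only [insert_subset_iff, singleton_subset_iff, mem_inter_iff, mem_prod, mem_Icc,
        mem_ofPred_eq]
      refine ⟨?_, ?_, ?_, ?_, ?_⟩ <;> refine ⟨⟨⟨?_, ?_⟩, ?_, ?_⟩, ?_⟩ <;> norm_num <;> linarith
    · exact convex_halfSpace_ge (LinearMap.fst ℝ ℝ ℝ + LinearMap.snd ℝ ℝ ℝ).isLinear 1
  · rintro ⟨x, y⟩ ⟨⟨⟨hx₀, hxa⟩, hy₀, hyb⟩, hxy⟩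
    have hright : (α + 1, y) ∈ pent α β :=
      hconv.mk_mem_of_mem_Icc' (hv _ (by simp)) (hv _ (by simp)) ⟨hy₀, hyb⟩
    rcases le_total y 1 with hy₁ | hy₁
    · have hleft : (1 - y, y) ∈ pent α β := by
        convert hconv (hv (1, 0) (by simp)) (hv (0, 1) (by simp)) (sub_nonneg.2 hy₁) hy₀
          (sub_add_cancel 1 y) using 1
        simp
      refine hconv.mk_mem_of_mem_Icc hleft hright ⟨?_, hxa⟩
      simp only [mem_ofPred_eq] at hxy
      linarith
    · have hleft : (0, y) ∈ pent α β :=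
        hconv.mk_mem_of_mem_Icc' (hv _ (by simp)) (hv _ (by simp)) ⟨hy₁, hyb⟩
      exact hconv.mk_mem_of_mem_Icc hleft hright ⟨hx₀, hxa⟩

theorem setIntegral_setOf_fst_mem_snd_mem {X Y E : Type*} [MeasurableSpace X]
    [MeasurableSpace Y] [NormedAddCommGroup E] [NormedSpace ℝ E] {μ : Measure X} {ν : Measure Y}
    [SFinite μ] [SFinite ν] {I : Set X} {J : X → Set Y} (hI : MeasurableSet I)
    (hJ : ∀ x, MeasurableSet (J x))
    (hs : MeasurableSet {p : X × Y | p.1 ∈ I ∧ p.2 ∈ J p.1}) {f : X × Y → E}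
    (hf : IntegrableOn f {p | p.1 ∈ I ∧ p.2 ∈ J p.1} (μ.prod ν)) :
    ∫ p in {p | p.1 ∈ I ∧ p.2 ∈ J p.1}, f p ∂μ.prod ν = ∫ x in I, ∫ y in J x, f (x, y) ∂ν ∂μ := by
  have hslice : ∀ x y, {p : X × Y | p.1 ∈ I ∧ p.2 ∈ J p.1}.indicator f (x, y) =
      I.indicator (fun x => (J x).indicator (fun y => f (x, y)) y) x := by
    intro x y
    by_cases hx : x ∈ I <;> by_cases hy : y ∈ J x <;> simp [indicator, hx, hy]
  rw [← integral_indicator hs, integral_prod _ ((integrable_indicator_iff hs).2 hf),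
    ← integral_indicator hI]
  simp only [hslice]
  congr 1 with x
  by_cases hx : x ∈ I
  · simp [indicator_of_mem hx, ← integral_indicator (hJ x)]
  · simp [indicator_of_notMem hx]

theorem setIntegral_Icc_eq_intervalIntegral {f : ℝ → ℝ} {a b : ℝ} (hab : a ≤ b) :
    ∫ x in Icc a b, f x = ∫ x in a..b, f x := by
  rw [integral_Icc_eq_integral_Ioc, intervalIntegral.integral_of_le hab]

theorem setIntegral_Ico_eq_intervalIntegral {f : ℝ → ℝ} {a b : ℝ} (hab : a ≤ b) :
    ∫ x in Ico a b, f x = ∫ x in a..b, f x := by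
  rw [integral_Ico_eq_integral_Ioc, intervalIntegral.integral_of_le hab]

theorem setIntegral_Icc_prod_Icc_diff_cornerTriangle {a b : ℝ} (ha : 1 ≤ a) (hb : 1 ≤ b)
    {f : ℝ × ℝ → ℝ} (hf : Continuous f) :
    ∫ p in Icc 0 a ×ˢ Icc 0 b \ cornerTriangle, f p =
      (∫ x in (0 : ℝ)..a, ∫ y in (0 : ℝ)..b, f (x, y)) -
        ∫ x in (0 : ℝ)..1, ∫ y in (0 : ℝ)..(1 - x), f (x, y) := by
  have hR : IntegrableOn f (Icc 0 a ×ˢ Icc 0 b) :=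
    hf.continuousOn.integrableOn_compact (isCompact_Icc.prod isCompact_Icc)
  have hT : IntegrableOn f cornerTriangle :=
    hR.mono_set (cornerTriangle_subset_Icc_prod_Icc ha hb)
  rw [setIntegral_sdiff measurableSet_cornerTriangle hR
    (cornerTriangle_subset_Icc_prod_Icc ha hb), Measure.volume_eq_prod]
  rw [Measure.volume_eq_prod] at hR hT
  congr 1
  · rw [setIntegral_prod _ hR, setIntegral_Icc_eq_intervalIntegral (by linarith)]
    congr 1 with x
    exact setIntegral_Icc_eq_intervalIntegral (by linarith)
  · rw [cornerTriangle, setIntegral_setOf_fst_mem_snd_mem measurableSet_Ico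
      (fun _ => measurableSet_Ico) measurableSet_cornerTriangle hT,
      setIntegral_Ico_eq_intervalIntegral zero_le_one]
    refine intervalIntegral.integral_congr fun x hx => ?_
    rw [uIcc_of_le zero_le_one] at hx
    exact setIntegral_Ico_eq_intervalIntegral (by linarith [hx.2])

theorem setIntegral_pent_of_eq_quadratic {α β : ℝ} (hα : 0 ≤ α) (hβ : 0 ≤ β)
    {f : ℝ × ℝ → ℝ} {k l m n o r : ℝ}
    (hf : ∀ p, f p = k + l * p.1 + m * p.2 + n * p.1 ^ 2 + o * p.1 * p.2 + r * p.2 ^ 2) :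
    ∫ p in pent α β, f p =
      k * ((α + 1) * (β + 1) - 1 / 2) + l * ((α + 1) ^ 2 * (β + 1) / 2 - 1 / 6) +
        m * ((α + 1) * (β + 1) ^ 2 / 2 - 1 / 6) + n * ((α + 1) ^ 3 * (β + 1) / 3 - 1 / 12) +
        o * ((α + 1) ^ 2 * (β + 1) ^ 2 / 4 - 1 / 24) +
        r * ((α + 1) * (β + 1) ^ 3 / 3 - 1 / 12) := by
  have hcont : Continuous f := by
    rw [show f = fun p => k + l * p.1 + m * p.2 + n * p.1 ^ 2 + o * p.1 * p.2 + r * p.2 ^ 2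
      from funext hf]
    fun_prop
  have inner (x u : ℝ) : ∫ y in (0 : ℝ)..u, f (x, y) =
      (k + l * x + n * x ^ 2) * u + (m + o * x) * u ^ 2 / 2 + r * u ^ 3 / 3 := by
    rw [integral_eq_of_eq_cubic (c₀ := k + l * x + n * x ^ 2) (c₁ := m + o * x) (c₂ := r)
      (c₃ := 0) (fun y => by rw [hf]; ring)]
    ring
  rw [pent_eq hα hβ, setIntegral_Icc_prod_Icc_diff_cornerTriangle (by linarith) (by linarith)
    hcont]
  simp only [inner]
  rw [integral_eq_of_eq_cubic (c₀ := k * (β + 1) + m * (β + 1) ^ 2 / 2 + r * (β + 1) ^ 3 / 3)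
      (c₁ := l * (β + 1) + o * (β + 1) ^ 2 / 2) (c₂ := n * (β + 1)) (c₃ := 0) (fun x => by ring),
    integral_eq_of_eq_cubic (c₀ := k + m / 2 + r / 3) (c₁ := -k + l - m + o / 2 - r)
      (c₂ := -l + n + m / 2 - o + r) (c₃ := -n + o / 2 - r / 3) (fun x => by ring)]
  ring

theorem pentArea_eq {α β : ℝ} (hα : 0 ≤ α) (hβ : 0 ≤ β) :
    pentArea α β = (α + 1) * (β + 1) - 1 / 2 := by
  have h := setIntegral_pent_of_eq_quadratic hα hβ (f := fun _ => 1) (k := 1) (l := 0) (m := 0)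
    (n := 0) (o := 0) (r := 0) (fun p => by ring)
  rw [setIntegral_const, smul_eq_mul, mul_one, measureReal_def] at h
  rw [pentArea, h]
  ring

theorem pentCentroid_eq {α β : ℝ} (hα : 0 ≤ α) (hβ : 0 ≤ β) :
    pentCentroid α β =
      (((α + 1) ^ 2 * (β + 1) / 2 - 1 / 6) / ((α + 1) * (β + 1) - 1 / 2),
        ((α + 1) * (β + 1) ^ 2 / 2 - 1 / 6) / ((α + 1) * (β + 1) - 1 / 2)) := by
  rw [pentCentroid, pentArea_eq hα hβ,
    setIntegral_pent_of_eq_quadratic hα hβ (k := 0) (l := 1) (m := 0) (n := 0) (o := 0) (r := 0)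
      (fun p => by ring),
    setIntegral_pent_of_eq_quadratic hα hβ (k := 0) (l := 0) (m := 1) (n := 0) (o := 0) (r := 0)
      (fun p => by ring)]
  congr 1 <;> ring

theorem pentBdryBary_eq {α β : ℝ} (hα : 0 ≤ α) (hβ : 0 ≤ β) :
    pentBdryBary α β =
      ((α + 1) * (α + β + 2) / (2 * α + 2 * β + 3),
        (β + 1) * (α + β + 2) / (2 * α + 2 * β + 3)) := by
  rw [pentBdryBary, pentBdryInt_fst hα hβ, pentBdryInt_snd hα hβ, pentPerim_eq hα hβ]

theorem pentD_self {α : ℝ} (hα : 0 ≤ α) :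
    pentD α α = (2 * (α + 1) ^ 2 / (4 * α + 3) - ((α + 1) ^ 3 / 2 - 1 / 6) / ((α + 1) ^ 2 - 1 / 2),
      2 * (α + 1) ^ 2 / (4 * α + 3) - ((α + 1) ^ 3 / 2 - 1 / 6) / ((α + 1) ^ 2 - 1 / 2)) := by
  rw [pentD, pentBdryBary_eq hα hα, pentCentroid_eq hα hα, Prod.mk_sub_mk]
  congr 1 <;> ring

theorem pentPi_self {α : ℝ} (hα : 0 ≤ α) :
    pentPi α α =
      !![(α + 1) ^ 4 / 3 - 1 / 12 - ((α + 1) ^ 3 / 2 - 1 / 6) ^ 2 / ((α + 1) ^ 2 - 1 / 2),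
        (α + 1) ^ 4 / 4 - 1 / 24 - ((α + 1) ^ 3 / 2 - 1 / 6) ^ 2 / ((α + 1) ^ 2 - 1 / 2);
        (α + 1) ^ 4 / 4 - 1 / 24 - ((α + 1) ^ 3 / 2 - 1 / 6) ^ 2 / ((α + 1) ^ 2 - 1 / 2),
        (α + 1) ^ 4 / 3 - 1 / 12 - ((α + 1) ^ 3 / 2 - 1 / 6) ^ 2 / ((α + 1) ^ 2 - 1 / 2)] := by
  have hA : (α + 1) ^ 2 - 1 / 2 ≠ 0 := by nlinarith
  rw [pentPi, pentCentroid_eq hα hα]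
  set c := ((α + 1) ^ 2 * (α + 1) / 2 - 1 / 6) / ((α + 1) * (α + 1) - 1 / 2) with hc
  rw [setIntegral_pent_of_eq_quadratic hα hα (k := c ^ 2) (l := -2 * c) (m := 0) (n := 1) (o := 0)
      (r := 0) (fun p => by ring),
    setIntegral_pent_of_eq_quadratic hα hα (k := c ^ 2) (l := -c) (m := -c) (n := 0) (o := 1)
      (r := 0) (fun p => by ring),
    setIntegral_pent_of_eq_quadratic hα hα (k := c ^ 2) (l := -c) (m := -c) (n := 0) (o := 1)
      (r := 0) (fun p => by ring),
    setIntegral_pent_of_eq_quadratic hα hα (k := c ^ 2) (l := 0) (m := -2 * c) (n := 0) (o := 0)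
      (r := 1) (fun p => by ring)]
  ext i j
  fin_cases i <;> fin_cases j <;>
    simp only [of_apply, cons_val', cons_val_zero, cons_val_one, cons_val_fin_one, Fin.zero_eta,
      Fin.mk_one, Fin.isValue, hc] <;>
    field_simp <;> ring

theorem mulVec_vec2_same {R : Type*} [CommRing R] (P Q x : R) :
    !![P, Q; Q, P] *ᵥ ![x, x] = (P + Q) • ![x, x] := by
  ext i
  fin_cases i <;>
    simp only [mulVec, of_apply, cons_val', cons_val_zero, cons_val_one, cons_val_fin_one,
      vec2_dotProduct', Fin.zero_eta, Fin.mk_one, Fin.isValue, Pi.smul_apply, smul_eq_mul] <;>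
    ring

theorem pentPi_self_mulVec {α : ℝ} (hα : 0 ≤ α) (x : ℝ) :
    pentPi α α *ᵥ ![x, x] =
      ((1 + 12 * α + 54 * α ^ 2 + 120 * α ^ 3 + 138 * α ^ 4 + 72 * α ^ 5 + 12 * α ^ 6) /
        (144 * ((α + 1) ^ 2 - 1 / 2))) • ![x, x] := by
  rw [pentPi_self hα, mulVec_vec2_same]
  congr 1
  set A := (α + 1) ^ 2 - 1 / 2 with hA_def
  have hA : A ≠ 0 := by nlinarith
  field_simp
  rw [hA_def]
  ring

theorem isUnit_det_pentPi_self {α : ℝ} (hα : 0 ≤ α) : IsUnit (pentPi α α).det := by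
  rw [pentPi_self hα, det_fin_two_of, mul_self_sub_mul_self, isUnit_iff_ne_zero]
  set A := (α + 1) ^ 2 - 1 / 2 with hA_def
  have hA : A ≠ 0 := by nlinarith
  field_simp
  rw [hA_def]
  ring_nf
  positivity

theorem dotProduct_mulVec_inv_of_mulVec_eq_smul {n K : Type*} [Fintype n] [DecidableEq n]
    [Field K] {M : Matrix n n K} {v : n → K} {μ : K} (hM : IsUnit M.det) (hv : M *ᵥ v = μ • v) :
    v ⬝ᵥ (M⁻¹ *ᵥ v) = μ⁻¹ * (v ⬝ᵥ v) := by
  have hv' : v = μ • (M⁻¹ *ᵥ v) := by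
    rw [← mulVec_smul, ← hv, mulVec_mulVec, nonsing_inv_mul _ hM,
      one_mulVec]
  rcases eq_or_ne μ 0 with rfl | hμ
  · rw [zero_smul] at hv'
    simp [hv']
  · have hinv : M⁻¹ *ᵥ v = μ⁻¹ • v := by
      conv_rhs => rw [hv', smul_smul, inv_mul_cancel₀ hμ, one_smul]
    rw [hinv, dotProduct_smul, smul_eq_mul]

theorem pent_symmetric_virtual_action (α : ℝ) (hα : 0 < α) :
    (pentPerim α α) ^ 2 / 2 *
        (1 / pentArea α α +
          dotProduct ![(pentD α α).1, (pentD α α).2]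
            (Matrix.mulVec (pentPi α α)⁻¹ ![(pentD α α).1, (pentD α α).2])) =
      (9 + 96 * α + 396 * α ^ 2 + 840 * α ^ 3 + 954 * α ^ 4 + 528 * α ^ 5 + 96 * α ^ 6) /
        (1 + 12 * α + 54 * α ^ 2 + 120 * α ^ 3 + 138 * α ^ 4 + 72 * α ^ 5 + 12 * α ^ 6) := by
  have hα₀ : 0 ≤ α := hα.le
  rw [pentPerim_eq hα₀ hα₀, pentArea_eq hα₀ hα₀, pentD_self hα₀]
  dsimp only
  rw [dotProduct_mulVec_inv_of_mulVec_eq_smul (isUnit_det_pentPi_self hα₀)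
    (pentPi_self_mulVec hα₀ _), vec2_dotProduct', ← sq]
  set A := (α + 1) ^ 2 - 1 / 2 with hA_def
  have hA : A ≠ 0 := by nlinarith
  field_simp
  rw [hA_def]
  ring
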